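/- For every integer m ≥ 3, every hereditary m-stable m-pattern 𝒫 is permutation stable: for every permutation σ of {1,…,m}, if σ𝒫 is also a hereditary m-stable m-pattern, then σ𝒫 = 𝒫. -/

import Mathlib

open Finset

/-- `vec m` is the set `{1, …, m}`. -/
def vec (m : ℕ) : Finset ℕ := Finset.Icc 1 m

/-- `IsNOP s k C` : `C 1, …, C k` form a naturally ordered partition of `{1, …, s}`
into `k` nonempty sets. -/
def IsNOP (s k : ℕ) (C : ℕ → Finset ℕ) : Prop :=
  (∀ i ∈ Finset.Icc 1 k, (C i).Nonempty) ∧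
  (∀ i ∈ Finset.Icc 1 k, ∀ j ∈ Finset.Icc 1 k, i ≠ j → Disjoint (C i) (C j)) ∧
  (Finset.Icc 1 k).biUnion C = Finset.Icc 1 s ∧
  (∀ i ∈ Finset.Icc 1 k, ∀ j ∈ Finset.Icc 1 k, i < j → (C i).min < (C j).min)

/-- The induced subset `P_γ`. -/
def indSet (C : ℕ → Finset ℕ) (k : ℕ) (P : Finset ℕ) : Finset ℕ :=
  (Finset.Icc 1 k).filter fun j => ((C j) ∩ P).Nonempty

/-- The induced pattern `𝒫_γ`. -/
def indPat (C : ℕ → Finset ℕ) (k : ℕ) (P : Set (Finset ℕ)) : Set (Finset ℕ) :=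
  indSet C k '' P

/-- An `m`-pattern: a nonempty collection of nonempty subsets of `{1, …, m}`. -/
def IsPattern (m : ℕ) (P : Set (Finset ℕ)) : Prop :=
  P.Nonempty ∧ ∀ Q ∈ P, Finset.Nonempty Q ∧ Q ⊆ vec m

/-- `k`-stability of an `m`-pattern. -/
def IsStable (m k : ℕ) (P : Set (Finset ℕ)) : Prop :=
  ∀ k', 2 ≤ k' → k' ≤ k → ∀ α β : ℕ → Finset ℕ,
    IsNOP m k' α → IsNOP m k' β → indPat α k' P = indPat β k' P

/-- `φ_m = {{1},{1,2},…,{1,…,m}}`. -/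
def phiPat (m : ℕ) : Set (Finset ℕ) :=
  { S | ∃ l, 1 ≤ l ∧ l ≤ m ∧ S = Finset.Icc 1 l }

/-- `A_{j,m}`: nonempty subsets of `{1,…,m}` of cardinality at most `j`. -/
def APat (j m : ℕ) : Set (Finset ℕ) :=
  { S | S.Nonempty ∧ S ⊆ vec m ∧ S.card ≤ j }

/-- `A¹_{j,m}`: subsets of `{1,…,m}` of cardinality at most `j` containing `1`. -/
def A1Pat (j m : ℕ) : Set (Finset ℕ) :=
  { S | 1 ∈ S ∧ S ⊆ vec m ∧ S.card ≤ j }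

/-- `H^m_{h,l}`: complements in `{1,…,m}` of a set of `h` holes, all lying in `[l,m]`. -/
def HPat (m h l : ℕ) : Set (Finset ℕ) :=
  { S | ∃ D : Finset ℕ, D.card = h ∧ D ⊆ Finset.Icc l m ∧ S = vec m \ D }

/-- `EH^m_{h,l}`: complements in `{1,…,m}` of a set of `h` holes, all in `[l,m]`,
whose first hole equals `l`. -/
def EHPat (m h l : ℕ) : Set (Finset ℕ) :=
  { S | ∃ D : Finset ℕ, D.card = h ∧ D ⊆ Finset.Icc l m ∧ l ∈ D ∧ S = vec m \ D }

/-- `D^m_{r,s} = A¹_{m-r-1,m} ∪ ⋃_{h=1}^{r} H^m_{h,s-h+1} ∪ {m⃗}`. -/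
def DPat (m r s : ℕ) : Set (Finset ℕ) :=
  A1Pat (m - r - 1) m ∪ (⋃ h ∈ Finset.Icc 1 r, HPat m h (s - h + 1)) ∪ {vec m}

/-- `γ_{i,j} ∈ Π(m+1,m)` (for `1 ≤ i < j ≤ m+1`): the naturally ordered partition of
`{1,…,m+1}` into `m` blocks, namely `{i,j}` together with the singletons of the
remaining points. -/
def gammaIJ (i j : ℕ) : ℕ → Finset ℕ :=
  fun t => if t = i then {i, j} else if t < j then {t} else {t + 1}

/-- A hereditary `m`-stable `m`-pattern. -/
def IsHSP (m : ℕ) (P : Set (Finset ℕ)) : Prop :=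
  IsPattern m P ∧ IsStable m m P ∧
  ∀ m', m < m' → ∃ Q : Set (Finset ℕ), IsPattern m' Q ∧ IsStable m' m' Q ∧
    ∀ γ : ℕ → Finset ℕ, IsNOP m' m γ → indPat γ m Q = P

/-- Unique stable lifts. -/
def HasUSL (m : ℕ) (P : Set (Finset ℕ)) : Prop :=
  ∀ m', m < m' → ∃! Q : Set (Finset ℕ),
    IsPattern m' Q ∧ IsStable m' m' Q ∧
    ∀ γ : ℕ → Finset ℕ, IsNOP m' m γ → indPat γ m Q = P


/-!
A hereditary stable pattern `P` is shifted: if `S ∈ P`, `a + 1 ∈ S` and `a ∉ S`, then replacing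
`a + 1` by `a` gives a member of `P`. Indeed, reading a lift of `P` to `{1, …, m + 1}` through the
two partitions `γ_{a,a+1}` and `γ_{a,a+2}`, which differ only in the blocks `a` and `a + 1`,
turns one set into the other.

For a shifted family `F` the degree `z ↦ #{S ∈ F | z ∈ S}` is antitone on `z ≥ 1`, and when two
adjacent points have the same degree the shift at them is a bijection, so their transposition
fixes `F`; hence so does every permutation of `{1, …, m}` preserving the degree. If `σ • F` is
shifted too, its degree `deg ∘ σ⁻¹` is another antitone rearrangement of `deg` on `{1, …, m}`,
hence equal to `deg`, and therefore `σ • F = F`.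
-/

open Pointwise Equiv MulAction

/-- Closure under the elementary shifts `a + 1 ↦ a`, which generate all left shifts. -/
def IsShifted (P : Set (Finset ℕ)) : Prop :=
  ∀ S ∈ P, ∀ a, 1 ≤ a → a + 1 ∈ S → a ∉ S → insert a (S.erase (a + 1)) ∈ P

def degree (F : Finset (Finset ℕ)) (z : ℕ) : ℕ := #{S ∈ F | z ∈ S}

lemma mem_indSet {C : ℕ → Finset ℕ} {k j : ℕ} {T : Finset ℕ} :
    j ∈ indSet C k T ↔ j ∈ Icc 1 k ∧ (C j ∩ T).Nonempty :=
  mem_filter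

lemma mem_gammaIJ {i j t u : ℕ} :
    u ∈ gammaIJ i j t ↔
      (t = i ∧ (u = i ∨ u = j)) ∨ (t ≠ i ∧ t < j ∧ u = t) ∨ (t ≠ i ∧ j ≤ t ∧ u = t + 1) := by
  unfold gammaIJ
  split_ifs <;> simp <;> omega

lemma min_gammaIJ {i j : ℕ} (hij : i < j) (t : ℕ) :
    (gammaIJ i j t).min = ((if t < j then t else t + 1 : ℕ) : WithTop ℕ) := by
  unfold gammaIJ
  split_ifs with hti htj
  · subst hti
    rw [min_insert, min_singleton]
    exact min_eq_left (by exact_mod_cast hij.le)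
  · exact absurd (hti ▸ hij) htj
  all_goals exact min_singleton

lemma isNOP_gammaIJ {m i j : ℕ} (hi : 1 ≤ i) (hij : i < j) (hj : j ≤ m + 1) :
    IsNOP (m + 1) m (gammaIJ i j) := by
  refine ⟨fun t _ => ?_, ?_, ?_, ?_⟩
  · unfold gammaIJ
    split_ifs <;> simp
  · intro t _ t' _ hne
    refine disjoint_left.2 fun u hu hu' => ?_
    rw [mem_gammaIJ] at hu hu'
    omega
  · ext u
    simp only [mem_biUnion, mem_Icc]
    constructor
    · rintro ⟨t, ht, hu⟩
      rw [mem_gammaIJ] at hu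
      omega
    · intro hu
      by_cases huj : u = j
      · exact ⟨i, by omega, mem_gammaIJ.2 (by omega)⟩
      by_cases hlt : u < j
      · exact ⟨u, by omega, mem_gammaIJ.2 (by omega)⟩
      · exact ⟨u - 1, by omega, mem_gammaIJ.2 (by omega)⟩
  · intro t _ t' _ hlt
    rw [min_gammaIJ hij, min_gammaIJ hij]
    exact_mod_cast (by split_ifs <;> omega :
      (if t < j then t else t + 1) < (if t' < j then t' else t' + 1))

theorem IsHSP.isShifted {m : ℕ} {P : Set (Finset ℕ)} (hP : IsHSP m P) : IsShifted P := by
  intro S hS a ha haS hnaS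
  have ham : a + 1 ≤ m := by simpa [vec] using (hP.1.2 S hS).2 haS
  have ham' : a ≤ m := by omega
  obtain ⟨Q, -, -, hQ⟩ := hP.2.2 (m + 1) (by omega)
  obtain ⟨T, hT, rfl⟩ : S ∈ indPat (gammaIJ a (a + 1)) m Q := by
    rwa [hQ _ (isNOP_gammaIJ ha (by omega) (by omega))]
  rw [← hQ _ (isNOP_gammaIJ (j := a + 2) ha (by omega) (by omega))]
  refine ⟨T, hT, ?_⟩
  have ha2T : a + 2 ∈ T := by simpa [mem_indSet, gammaIJ, ham, Finset.Nonempty] using haS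
  have hgap : a ∉ T ∧ a + 1 ∉ T := by
    simpa [mem_indSet, gammaIJ, ham, ha, Finset.Nonempty, ham'] using hnaS
  have hblocks : ∀ t, t ≠ a → t ≠ a + 1 → gammaIJ a (a + 2) t = gammaIJ a (a + 1) t := by
    intro t hta hta1
    have hlt : t < a + 2 ↔ t < a + 1 := by omega
    simp [gammaIJ, hta, hlt]
  ext t
  obtain rfl | hta := eq_or_ne t a
  · simp [mem_indSet, gammaIJ, ha, ham', ha2T, Finset.Nonempty]
  obtain rfl | hta1 := eq_or_ne t (a + 1)
  · simp [mem_indSet, gammaIJ, hgap.2]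
  · rw [mem_indSet, hblocks t hta hta1]
    simp [mem_indSet, hta, hta1]

section Swap

variable {α : Type*} [DecidableEq α] {a b : α} {S : Finset α}

lemma mem_swap_smul_finset {u : α} : u ∈ swap a b • S ↔ swap a b u ∈ S := by
  conv_lhs => rw [← swap_inv]
  exact mem_inv_smul_finset_iff

lemma swap_smul_finset_of_notMem_of_mem (ha : a ∉ S) (hb : b ∈ S) :
    swap a b • S = insert a (S.erase b) := by
  ext u
  rw [mem_swap_smul_finset, swap_apply_def]
  split_ifs <;> simp_all

lemma swap_smul_finset_eq_self (h : a ∈ S ↔ b ∈ S) : swap a b • S = S := by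
  ext u
  rw [mem_swap_smul_finset, swap_apply_def]
  split_ifs <;> simp_all

end Swap

lemma degree_smul (σ : Perm ℕ) (F : Finset (Finset ℕ)) (z : ℕ) :
    degree (σ • F) z = degree F (σ⁻¹ z) := by
  rw [degree, degree, smul_finset_def, filter_image,
    card_image_of_injective _ (MulAction.injective σ)]
  exact congrArg card (filter_congr fun S _ => inv_smul_mem_iff.symm)

section Shifted

variable {F : Finset (Finset ℕ)} {a : ℕ}

lemma filter_mem_swap_smul_subset (hF : IsShifted F) (ha : 1 ≤ a) :
    {T ∈ swap a (a + 1) • F | a ∈ T} ⊆ {S ∈ F | a ∈ S} := by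
  intro T hT
  simp only [mem_filter, mem_smul_finset] at hT ⊢
  obtain ⟨⟨S, hS, rfl⟩, haT⟩ := hT
  have ha1S : a + 1 ∈ S := by rwa [mem_swap_smul_finset, swap_apply_left] at haT
  refine ⟨?_, haT⟩
  by_cases haS : a ∈ S
  · rwa [swap_smul_finset_eq_self (iff_of_true haS ha1S)]
  · rw [swap_smul_finset_of_notMem_of_mem haS ha1S]
    exact hF S hS a ha ha1S haS

lemma degree_succ_le (hF : IsShifted F) (ha : 1 ≤ a) : degree F (a + 1) ≤ degree F a :=
  calc degree F (a + 1) = degree (swap a (a + 1) • F) a := by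
        rw [degree_smul, swap_inv, swap_apply_left]
    _ ≤ degree F a := card_le_card (filter_mem_swap_smul_subset hF ha)

lemma antitoneOn_degree (hF : IsShifted F) : AntitoneOn (degree F) (Set.Ici 1) :=
  antitoneOn_nat_Ici_of_succ_le fun _ hn => degree_succ_le hF hn

lemma swap_succ_smul_eq_self (hF : IsShifted F) (ha : 1 ≤ a)
    (h : degree F (a + 1) = degree F a) : swap a (a + 1) • F = F := by
  have hfilter : {T ∈ swap a (a + 1) • F | a ∈ T} = {S ∈ F | a ∈ S} := by
    refine eq_of_subset_of_card_le (filter_mem_swap_smul_subset hF ha) ?_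
    rw [← degree, ← degree, degree_smul, swap_inv, swap_apply_left, h]
  have hsub : F ⊆ swap a (a + 1) • F := by
    intro S hS
    by_cases haS : a ∈ S
    · exact (mem_filter.1 (hfilter ▸ mem_filter.2 ⟨hS, haS⟩)).1
    · rw [← inv_smul_mem_iff, swap_inv]
      by_cases ha1S : a + 1 ∈ S
      · rw [swap_smul_finset_of_notMem_of_mem haS ha1S]
        exact hF S hS a ha ha1S haS
      · rwa [swap_smul_finset_eq_self (iff_of_false haS ha1S)]
  exact (eq_of_subset_of_card_le hsub (card_smul_finset _ _).le).symm

lemma swap_mem_stabilizer (hF : IsShifted F) (ha : 1 ≤ a) {b : ℕ} (hab : a ≤ b)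
    (h : degree F b = degree F a) : swap a b ∈ stabilizer (Perm ℕ) F := by
  induction b, hab using Nat.le_induction with
  | base => rw [swap_self]; exact one_mem _
  | succ b hab ih =>
    have hb : degree F b = degree F a :=
      le_antisymm (antitoneOn_degree hF ha (le_trans ha hab) hab)
        (h ▸ degree_succ_le hF (le_trans ha hab))
    have hstep : swap b (b + 1) ∈ stabilizer (Perm ℕ) F :=
      mem_stabilizer_iff.2 (swap_succ_smul_eq_self hF (le_trans ha hab) (h.trans hb.symm))
    rcases hab.eq_or_lt with rfl | hlt
    · exact hstep
    · rw [swap_comm, ← swap_mul_swap_mul_swap hlt.ne (by omega : a ≠ b + 1)]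
      exact mul_mem (mul_mem hstep (ih hb)) hstep

end Shifted

lemma Equiv.Perm.apply_mem_iff_of_forall_notMem {α : Type*} {σ : Perm α} {s : Finset α}
    (hσ : ∀ x ∉ s, σ x = x) (z : α) : σ z ∈ s ↔ z ∈ s := by
  refine ⟨fun hz => ?_, fun hz => ?_⟩
  · by_contra h
    exact h (hσ z h ▸ hz)
  · by_contra h
    rw [σ.injective (hσ _ h)] at h
    exact h hz

lemma mem_of_forall_swap_mem {β : Type*} {H : Subgroup (Perm ℕ)} {d : ℕ → β}
    (hswap : ∀ x y, 1 ≤ x → 1 ≤ y → d x = d y → swap x y ∈ H) (m : ℕ) {τ : Perm ℕ}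
    (hτ : ∀ x ∉ Icc 1 m, τ x = x) (hd : ∀ z ∈ Icc 1 m, d (τ z) = d z) : τ ∈ H := by
  induction m generalizing τ with
  | zero =>
    convert H.one_mem
    ext x
    exact hτ x (by simp)
  | succ m ih =>
    have hmem := τ.apply_mem_iff_of_forall_notMem hτ
    have hτm : τ (m + 1) ∈ Icc 1 (m + 1) := (hmem _).2 (by simp)
    have hdm : d (τ (m + 1)) = d (m + 1) := hd _ (by simp)
    set w := swap (m + 1) (τ (m + 1))
    have hw : w ∈ H := hswap _ _ (by omega) (mem_Icc.1 hτm).1 hdm.symm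
    have hdw : ∀ u, d (w u) = d u := by
      intro u
      simp only [w, swap_apply_def]
      split_ifs with h1 h2
      · rw [h1, hdm]
      · rw [h2, hdm]
      · rfl
    have hρ : w * τ ∈ H := by
      refine ih (fun x hx => ?_) (fun z hz => ?_)
      · by_cases hxm : x = m + 1
        · simp [hxm, w]
        have hx' : x ∉ Icc 1 (m + 1) := by simp at hx ⊢; omega
        rw [Perm.mul_apply, hτ x hx', swap_apply_of_ne_of_ne hxm (fun h => hx' (h ▸ hτm))]
      · rw [Perm.mul_apply, hdw, hd z (Icc_subset_Icc_right m.le_succ hz)]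
    simpa [w] using mul_mem hw hρ

section Rearrangement

variable {β : Type*} [LinearOrder β] {d : ℕ → β} {m : ℕ}

lemma AntitoneOn.le_apply_iff_le_card (hd : AntitoneOn d (Set.Icc 1 m)) {z : ℕ}
    (hz : z ∈ Icc 1 m) (c : β) : c ≤ d z ↔ z ≤ #{w ∈ Icc 1 m | c ≤ d w} := by
  obtain ⟨hz1, hzm⟩ := mem_Icc.1 hz
  constructor
  · intro hc
    calc z = #(Icc 1 z) := by simp
      _ ≤ #{w ∈ Icc 1 m | c ≤ d w} := card_le_card fun w hw => by
        obtain ⟨hw1, hwz⟩ := mem_Icc.1 hw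
        exact mem_filter.2 ⟨mem_Icc.2 ⟨hw1, hwz.trans hzm⟩,
          hc.trans (hd ⟨hw1, hwz.trans hzm⟩ ⟨hz1, hzm⟩ hwz)⟩
  · intro hcard
    by_contra! hc
    have hsub : {w ∈ Icc 1 m | c ≤ d w} ⊆ Icc 1 (z - 1) := fun w hw => by
      obtain ⟨hw, hcw⟩ := mem_filter.1 hw
      rw [mem_Icc] at hw ⊢
      refine ⟨hw.1, ?_⟩
      by_contra! hzw
      exact (hcw.trans (hd ⟨hz1, hzm⟩ hw (by omega))).not_gt hc
    have := card_le_card hsub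
    simp only [Nat.card_Icc] at this
    omega

lemma AntitoneOn.apply_perm_eq (hd : AntitoneOn d (Set.Icc 1 m)) {σ : Perm ℕ}
    (hdσ : AntitoneOn (d ∘ σ) (Set.Icc 1 m)) (hσ : ∀ x ∉ Icc 1 m, σ x = x) :
    ∀ z ∈ Icc 1 m, d (σ z) = d z := by
  have himage : (Icc 1 m).image σ = Icc 1 m := by
    refine eq_of_subset_of_card_le (fun _ hy => ?_) (card_image_of_injective _ σ.injective).ge
    obtain ⟨x, hx, rfl⟩ := mem_image.1 hy
    exact (σ.apply_mem_iff_of_forall_notMem hσ x).2 hx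
  have hcard (c : β) : #{w ∈ Icc 1 m | c ≤ d (σ w)} = #{w ∈ Icc 1 m | c ≤ d w} := by
    rw [← card_image_of_injective _ σ.injective, ← filter_image (p := fun w => c ≤ d w), himage]
  intro z hz
  refine eq_of_forall_le_iff fun c => ?_
  rw [← Function.comp_apply (f := d), hdσ.le_apply_iff_le_card hz, hd.le_apply_iff_le_card hz,
    ← hcard]
  rfl

end Rearrangement

lemma mem_stabilizer_of_degree_eq {F : Finset (Finset ℕ)} (hF : IsShifted F) {m : ℕ}
    {τ : Perm ℕ} (hτ : ∀ x ∉ Icc 1 m, τ x = x)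
    (hd : ∀ z ∈ Icc 1 m, degree F (τ z) = degree F z) : τ ∈ stabilizer (Perm ℕ) F := by
  refine mem_of_forall_swap_mem (fun x y hx hy hxy => ?_) m hτ hd
  rcases le_total x y with hxy' | hyx
  · exact swap_mem_stabilizer hF hx hxy' hxy.symm
  · rw [swap_comm]
    exact swap_mem_stabilizer hF hy hyx hxy

theorem smul_eq_self_of_isShifted {F : Finset (Finset ℕ)} {σ : Perm ℕ} {m : ℕ}
    (hF : IsShifted F) (hσF : IsShifted ↑(σ • F)) (hσ : ∀ x ∉ Icc 1 m, σ x = x) :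
    σ • F = F := by
  have hσ' : ∀ x ∉ Icc 1 m, σ⁻¹ x = x := fun x hx => Perm.inv_eq_iff_eq.2 (hσ x hx).symm
  have hanti : AntitoneOn (degree F ∘ ⇑σ⁻¹) (Set.Icc 1 m) := by
    have h := (antitoneOn_degree hσF).mono (Set.Icc_subset_Ici_self : Set.Icc 1 m ⊆ _)
    rwa [funext (degree_smul σ F)] at h
  have hdeg := ((antitoneOn_degree hF).mono Set.Icc_subset_Ici_self).apply_perm_eq hanti hσ'
  exact mem_stabilizer_iff.1 (inv_mem_iff.1 (mem_stabilizer_of_degree_eq hF hσ' hdeg))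

theorem stmt13_general (m : ℕ) (P : Set (Finset ℕ)) (hP : IsHSP m P)
    (σ : Equiv.Perm ℕ) (hσ : ∀ x : ℕ, x ∉ vec m → σ x = x)
    (hσP : IsHSP m ((fun Q : Finset ℕ => Q.image σ) '' P)) :
    (fun Q : Finset ℕ => Q.image σ) '' P = P := by
  have hfin : P.Finite :=
    (vec m).powerset.finite_toSet.subset fun S hS => by simpa using (hP.1.2 S hS).2
  lift P to Finset (Finset ℕ) using hfin with F
  change IsHSP m (σ • (F : Set (Finset ℕ))) at hσP
  change σ • (F : Set (Finset ℕ)) = F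
  rw [← coe_smul_finset] at hσP ⊢
  rw [smul_eq_self_of_isShifted hP.isShifted hσP.isShifted hσ]

theorem stmt13 (m : ℕ) (hm : 3 ≤ m) (P : Set (Finset ℕ)) (hP : IsHSP m P)
    (σ : Equiv.Perm ℕ) (hσ : ∀ x : ℕ, x ∉ vec m → σ x = x)
    (hσP : IsHSP m ((fun Q : Finset ℕ => Q.image σ) '' P)) :
    (fun Q : Finset ℕ => Q.image σ) '' P = P :=
  stmt13_general m P hP σ hσ hσP
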